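/- arXiv:2307.00546 — 4 statements merged into one kernel-verified Lean document; each statement's English description precedes it below -/
import Mathlib

section
/- Let T = {a,b} with a + b + 1 ≤ n and a < n/2 < b. Let f = {A,B} and g = {C,D} be flags of type T (|A| = |C| = a, |B| = |D| = b, A ⊆ B, C ⊆ D). If A ∪ C ⊆ B ∩ D, then the number of flags h = {G,H} of type T that are in general position with both f and g equals C(n - 2b + |B∩D|, a) · C(|B∩D| - |A∪C|, b + |B∩D| - n), where C(m,k) denotes the binomial coefficient. -/
open Finset

/-- A flag of type `{a,b}` on `[n]`: a pair `A ⊂ B` of subsets of `Fin n`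
with `|A| = a` and `|B| = b`. -/
abbrev Flag2 (n a b : ℕ) : Type :=
  {p : Finset (Fin n) × Finset (Fin n) // p.1 ⊂ p.2 ∧ p.1.card = a ∧ p.2.card = b}

/-- Two sets are "in general position": disjoint or with union everything. -/
def gp {n : ℕ} (X Y : Finset (Fin n)) : Prop :=
  X ∩ Y = ∅ ∨ X ∪ Y = Finset.univ

theorem gp_comm {n : ℕ} {X Y : Finset (Fin n)} (h : gp X Y) : gp Y X := by
  rcases h with h | h
  · exact Or.inl (by rwa [Finset.inter_comm])
  · exact Or.inr (by rwa [Finset.union_comm])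

/-- Two flags are in general position. -/
def GenPos {n a b : ℕ} (f g : Flag2 n a b) : Prop :=
  gp f.1.1 g.1.1 ∧ gp f.1.1 g.1.2 ∧ gp f.1.2 g.1.1 ∧ gp f.1.2 g.1.2

instance {n a b : ℕ} (f g : Flag2 n a b) : Decidable (GenPos f g) := by
  unfold GenPos gp; infer_instance

/-- The general position graph `Γ(n, {a,b})`. -/
def GPGraph (n a b : ℕ) : SimpleGraph (Flag2 n a b) where
  Adj f g := f ≠ g ∧ GenPos f g
  symm := ⟨by
    rintro f g ⟨hne, h1, h2, h3, h4⟩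
    exact ⟨hne.symm, gp_comm h1, gp_comm h3, gp_comm h2, gp_comm h4⟩⟩
  loopless := ⟨fun f h => h.1 rfl⟩

/-- `N(f,g)`: the set of flags of type `{a,b}` in general position with both `f` and `g`. -/
def Nset {n a b : ℕ} (f g : Flag2 n a b) : Finset (Flag2 n a b) :=
  Finset.univ.filter fun h => GenPos f h ∧ GenPos g h

/-- Binomial coefficient `C(m,k)` with an integer lower index, `0` when `k < 0`. -/
def binom (m : ℕ) (k : ℤ) : ℕ := if 0 ≤ k then m.choose k.toNat else 0

-- helper lemmas
lemma gp_small {n : ℕ} {X Y : Finset (Fin n)} (h : gp X Y) (hc : X.card + Y.card < n) :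
    X ∩ Y = ∅ := by
  rcases h with h | h
  · exact h
  · exfalso
    have h1 := Finset.card_union_le X Y
    rw [h, Finset.card_univ, Fintype.card_fin] at h1
    omega

lemma gp_large {n : ℕ} {X Y : Finset (Fin n)} (h : gp X Y) (hc : n < X.card + Y.card) :
    X ∪ Y = Finset.univ := by
  rcases h with h | h
  · exfalso
    have hd : Disjoint X Y := Finset.disjoint_iff_inter_eq_empty.mpr h
    have h1 := Finset.card_union_of_disjoint hd
    have h2 : (X ∪ Y).card ≤ n := by
      have := Finset.card_le_univ (X ∪ Y)
      rwa [Fintype.card_fin] at this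
    omega
  · exact h

lemma char_lemma {n a b : ℕ} (hab : a + b + 1 ≤ n) (ha2 : 2 * a < n) (hb2 : n < 2 * b)
    (f g h : Flag2 n a b) :
    (GenPos f h ∧ GenPos g h) ↔
      (h.1.1 ⊆ (f.1.2 ∪ g.1.2)ᶜ ∧ (f.1.2 ∩ g.1.2)ᶜ ⊆ h.1.2 ∧
        h.1.2 ∩ (f.1.1 ∪ g.1.1) = ∅) := by
  obtain ⟨hABs, hA, hB⟩ := f.2
  obtain ⟨hCDs, hC, hD⟩ := g.2
  obtain ⟨hGHs, hG, hH⟩ := h.2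
  have hABsub := hABs.subset
  have hCDsub := hCDs.subset
  constructor
  · rintro ⟨⟨_, fh2, fh3, fh4⟩, ⟨_, gh2, gh3, gh4⟩⟩
    have hBG : f.1.2 ∩ h.1.1 = ∅ := gp_small fh3 (by omega)
    have hDG : g.1.2 ∩ h.1.1 = ∅ := gp_small gh3 (by omega)
    have hBH : f.1.2 ∪ h.1.2 = univ := gp_large fh4 (by omega)
    have hDH : g.1.2 ∪ h.1.2 = univ := gp_large gh4 (by omega)
    have hAH : f.1.1 ∩ h.1.2 = ∅ := gp_small fh2 (by omega)
    have hCH : g.1.1 ∩ h.1.2 = ∅ := gp_small gh2 (by omega)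
    rw [Finset.eq_empty_iff_forall_notMem] at hBG hDG hAH hCH
    rw [Finset.eq_univ_iff_forall] at hBH hDH
    refine ⟨?_, ?_, ?_⟩
    · intro x hx
      simp only [mem_compl, mem_union]
      push_neg
      exact ⟨fun hxB => hBG x (by simp [hx, hxB]),
             fun hxD => hDG x (by simp [hx, hxD])⟩
    · intro x hx
      simp only [mem_compl, mem_inter] at hx
      push_neg at hx
      by_cases hxB : x ∈ f.1.2
      · rcases Finset.mem_union.mp (hDH x) with hd | hd
        · exact absurd hd (hx hxB)
        · exact hd
      · rcases Finset.mem_union.mp (hBH x) with hb | hb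
        · exact absurd hb hxB
        · exact hb
    · rw [Finset.eq_empty_iff_forall_notMem]
      intro x hx
      simp only [mem_inter, mem_union] at hx
      rcases hx.2 with hxA | hxC
      · exact hAH x (by simp [hx.1, hxA])
      · exact hCH x (by simp [hx.1, hxC])
  · rintro ⟨h1, h2, h3⟩
    have hGB : f.1.2 ∩ h.1.1 = ∅ := by
      rw [Finset.eq_empty_iff_forall_notMem]
      intro x hx
      rw [mem_inter] at hx
      have := h1 hx.2
      simp only [mem_compl, mem_union] at this
      exact this (Or.inl hx.1)
    have hGD : g.1.2 ∩ h.1.1 = ∅ := by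
      rw [Finset.eq_empty_iff_forall_notMem]
      intro x hx
      rw [mem_inter] at hx
      have := h1 hx.2
      simp only [mem_compl, mem_union] at this
      exact this (Or.inr hx.1)
    rw [Finset.eq_empty_iff_forall_notMem] at h3
    have hAH : f.1.1 ∩ h.1.2 = ∅ := by
      rw [Finset.eq_empty_iff_forall_notMem]
      intro x hx
      rw [mem_inter] at hx
      exact h3 x (by simp [hx.1, hx.2])
    have hCH : g.1.1 ∩ h.1.2 = ∅ := by
      rw [Finset.eq_empty_iff_forall_notMem]
      intro x hx
      rw [mem_inter] at hx
      exact h3 x (by simp [hx.1, hx.2])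
    have hBH : f.1.2 ∪ h.1.2 = univ := by
      rw [Finset.eq_univ_iff_forall]
      intro x
      rw [mem_union]
      by_cases hxB : x ∈ f.1.2
      · exact Or.inl hxB
      · exact Or.inr (h2 (by simp [hxB]))
    have hDH : g.1.2 ∪ h.1.2 = univ := by
      rw [Finset.eq_univ_iff_forall]
      intro x
      rw [mem_union]
      by_cases hxD : x ∈ g.1.2
      · exact Or.inl hxD
      · exact Or.inr (h2 (by simp [hxD]))
    have hAG : f.1.1 ∩ h.1.1 = ∅ := by
      rw [Finset.eq_empty_iff_forall_notMem] at hGB ⊢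
      intro x hx
      rw [mem_inter] at hx
      exact hGB x (by simp [hABsub hx.1, hx.2])
    have hCG : g.1.1 ∩ h.1.1 = ∅ := by
      rw [Finset.eq_empty_iff_forall_notMem] at hGD ⊢
      intro x hx
      rw [mem_inter] at hx
      exact hGD x (by simp [hCDsub hx.1, hx.2])
    exact ⟨⟨Or.inl hAG, Or.inl hAH, Or.inl hGB, Or.inr hBH⟩,
           ⟨Or.inl hCG, Or.inl hCH, Or.inl hGD, Or.inr hDH⟩⟩

/-- Proposition 2.1, counting formula: for flags `f = {A,B}`, `g = {C,D}` of type
`{a,b}` with `a + b + 1 ≤ n`, `a < n/2 < b` and `A ∪ C ⊆ B ∩ D`, the number of flags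
in general position with both `f` and `g` is
`C(n - 2b + |B∩D|, a) * C(|B∩D| - |A∪C|, b + |B∩D| - n)`. -/
theorem card_Nset_eq (n a b : ℕ) (ha : 1 ≤ a) (hab : a + b + 1 ≤ n)
    (ha2 : 2 * a < n) (hb2 : n < 2 * b)
    (f g : Flag2 n a b) (hsub : f.1.1 ∪ g.1.1 ⊆ f.1.2 ∩ g.1.2) :
    (Nset f g).card =
      Nat.choose (n + (f.1.2 ∩ g.1.2).card - 2 * b) a *
        binom ((f.1.2 ∩ g.1.2).card - (f.1.1 ∪ g.1.1).card)
          ((b : ℤ) + (f.1.2 ∩ g.1.2).card - n) := by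
  classical
  obtain ⟨hABs, hA, hB⟩ := f.2
  obtain ⟨hCDs, hC, hD⟩ := g.2
  set A := f.1.1 with hAdef
  set B := f.1.2 with hBdef
  set C := g.1.1 with hCdef
  set D := g.1.2 with hDdef
  set E : Finset (Fin n) := (B ∪ D)ᶜ with hEdef
  set I : Finset (Fin n) := B ∩ D with hIdef
  set K : Finset (Fin n) := A ∪ C with hKdef
  have hKI : K ⊆ I := hsub
  have hIB : I.card ≤ b := by
    have : I ⊆ B := Finset.inter_subset_left
    have := Finset.card_le_card this
    omega
  have hIn : I.card ≤ n := by
    have := Finset.card_le_univ I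
    rwa [Fintype.card_fin] at this
  -- the product set
  set Q : Finset (Finset (Fin n)) :=
    (Finset.univ.powersetCard b).filter (fun H => Iᶜ ⊆ H ∧ H ∩ K = ∅) with hQdef
  set P : Finset (Finset (Fin n) × Finset (Fin n)) := (Finset.powersetCard a E) ×ˢ Q with hPdef
  -- step 1 : card Nset = card P
  have hEI : E ⊆ Iᶜ := Finset.compl_subset_compl.mpr (by
    exact Finset.inter_subset_union)
  have step1 : (Nset f g).card = P.card := by
    apply Finset.card_bij (fun h _ => h.1)
    · intro h hh
      rw [Nset, Finset.mem_filter] at hh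
      rw [char_lemma hab ha2 hb2 f g h] at hh
      obtain ⟨_, h1, h2, h3⟩ := hh
      simp only [hPdef, Finset.mem_product, Finset.mem_powersetCard, hQdef, Finset.mem_filter]
      exact ⟨⟨h1, h.2.2.1⟩, ⟨⟨Finset.subset_univ _, h.2.2.2⟩, h2, h3⟩⟩
    · intro h1 _ h2 _ heq
      exact Subtype.ext heq
    · intro p hp
      simp only [hPdef, Finset.mem_product, Finset.mem_powersetCard, hQdef,
        Finset.mem_filter] at hp
      obtain ⟨⟨hpE, hpa⟩, ⟨⟨_, hpb⟩, hpI, hpK⟩⟩ := hp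
      have hGH : p.1 ⊂ p.2 := by
        refine Finset.ssubset_iff_subset_ne.mpr ⟨hpE.trans (hEI.trans hpI), ?_⟩
        intro hcon
        rw [hcon] at hpa
        omega
      refine ⟨⟨p, hGH, hpa, hpb⟩, ?_, rfl⟩
      rw [Nset, Finset.mem_filter]
      refine ⟨Finset.mem_univ _, ?_⟩
      rw [char_lemma hab ha2 hb2]
      exact ⟨hpE, hpI, hpK⟩
  rw [step1, hPdef, Finset.card_product, Finset.card_powersetCard]
  -- card of E
  have hBD : (B ∪ D).card = 2 * b - I.card := by
    have h1 := Finset.card_union_add_card_inter B D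
    rw [hB, hD, ← hIdef] at h1
    omega
  have hEcard : E.card = n + I.card - 2 * b := by
    rw [hEdef, Finset.card_compl, Fintype.card_fin, hBD]
    omega
  rw [hEcard]
  congr 1
  -- now count Q
  by_cases hcase : n ≤ b + I.card
  · -- binom is a genuine choose
    have hk : (0:ℤ) ≤ (b : ℤ) + (I.card : ℤ) - n := by
      push_cast; omega
    rw [binom, if_pos hk]
    have hk2 : ((b : ℤ) + (I.card : ℤ) - (n:ℤ)).toNat = b + I.card - n := by
      omega
    rw [hk2]
    set r : ℕ := b + I.card - n with hrdef
    have hIK : (I \ K).card = I.card - K.card := Finset.card_sdiff_of_subset hKI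
    rw [← hIK, ← Finset.card_powersetCard r (I \ K)]
    apply Finset.card_bij (fun H _ => H ∩ I)
    · intro H hH
      simp only [hQdef, Finset.mem_filter, Finset.mem_powersetCard] at hH
      obtain ⟨⟨_, hHb⟩, hHI, hHK⟩ := hH
      rw [Finset.mem_powersetCard]
      rw [Finset.eq_empty_iff_forall_notMem] at hHK
      constructor
      · intro x hx
        rw [mem_inter] at hx
        rw [mem_sdiff]
        exact ⟨hx.2, fun hxK => hHK x (by simp [hx.1, hxK])⟩
      · have hdecomp : H = Iᶜ ∪ (H ∩ I) := by
          ext x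
          simp only [mem_union, mem_compl, mem_inter]
          constructor
          · intro hx
            by_cases hxI : x ∈ I
            · exact Or.inr ⟨hx, hxI⟩
            · exact Or.inl hxI
          · rintro (hx | hx)
            · exact hHI (by simpa using hx)
            · exact hx.1
        have hdisj : Disjoint Iᶜ (H ∩ I) := by
          rw [Finset.disjoint_left]
          intro x hx hx2
          rw [mem_compl] at hx
          rw [mem_inter] at hx2
          exact hx hx2.2
        have hcard := Finset.card_union_of_disjoint hdisj
        rw [← hdecomp, hHb, Finset.card_compl, Fintype.card_fin] at hcard
        omega
    · intro H1 hH1 H2 hH2 heq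
      simp only [hQdef, Finset.mem_filter, Finset.mem_powersetCard] at hH1 hH2
      have d1 : H1 = Iᶜ ∪ (H1 ∩ I) := by
        ext x
        simp only [mem_union, mem_compl, mem_inter]
        constructor
        · intro hx
          by_cases hxI : x ∈ I
          · exact Or.inr ⟨hx, hxI⟩
          · exact Or.inl hxI
        · rintro (hx | hx)
          · exact hH1.2.1 (by simpa using hx)
          · exact hx.1
      have d2 : H2 = Iᶜ ∪ (H2 ∩ I) := by
        ext x
        simp only [mem_union, mem_compl, mem_inter]
        constructor
        · intro hx
          by_cases hxI : x ∈ I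
          · exact Or.inr ⟨hx, hxI⟩
          · exact Or.inl hxI
        · rintro (hx | hx)
          · exact hH2.2.1 (by simpa using hx)
          · exact hx.1
      rw [d1, d2, heq]
    · intro S hS
      rw [Finset.mem_powersetCard] at hS
      obtain ⟨hSsub, hSr⟩ := hS
      have hSI : S ⊆ I := hSsub.trans (Finset.sdiff_subset)
      refine ⟨Iᶜ ∪ S, ?_, ?_⟩
      · simp only [hQdef, Finset.mem_filter, Finset.mem_powersetCard]
        refine ⟨⟨Finset.subset_univ _, ?_⟩, Finset.subset_union_left, ?_⟩
        · have hdisj : Disjoint Iᶜ S := by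
            rw [Finset.disjoint_left]
            intro x hx hx2
            rw [mem_compl] at hx
            exact hx (hSI hx2)
          rw [Finset.card_union_of_disjoint hdisj, Finset.card_compl, Fintype.card_fin, hSr]
          omega
        · rw [Finset.eq_empty_iff_forall_notMem]
          intro x hx
          simp only [mem_inter, mem_union, mem_compl] at hx
          obtain ⟨hx1 | hx1, hx2⟩ := hx
          · exact hx1 (hKI hx2)
          · have := hSsub hx1
            rw [mem_sdiff] at this
            exact this.2 hx2
      · ext x
        simp only [mem_inter, mem_union, mem_compl]
        constructor
        · rintro ⟨hx1 | hx1, hx2⟩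
          · exact absurd hx2 hx1
          · exact hx1
        · intro hx
          exact ⟨Or.inr hx, hSI hx⟩
  · -- empty case
    have hk : ¬ (0:ℤ) ≤ (b : ℤ) + (I.card : ℤ) - n := by
      push_cast; omega
    rw [binom, if_neg hk]
    rw [Finset.card_eq_zero]
    rw [Finset.eq_empty_iff_forall_notMem]
    intro H hH
    simp only [hQdef, Finset.mem_filter, Finset.mem_powersetCard] at hH
    obtain ⟨⟨_, hHb⟩, hHI, _⟩ := hH
    have := Finset.card_le_card hHI
    rw [Finset.card_compl, Fintype.card_fin, hHb] at this
    omega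
end

section
/- Let T = {a,b} ⊆ [n-1] with a < n/2 < b < 2n/3 and a + b + 1 ≤ n. The partition Ω = {F^(T|B) : B ⊆ [n], |B| = b} is a system of blocks for Aut(Γ(n,T)) acting on the set of flags of type T. -/
open Finset

section aux
variable {n a b : ℕ}

lemma card_le_of_union_univ {X Y : Finset (Fin n)} (h : X ∪ Y = Finset.univ) :
    n ≤ X.card + Y.card := by
  have h1 := Finset.card_union_add_card_inter X Y
  have h2 : (X ∪ Y).card = n := by rw [h, Finset.card_univ, Fintype.card_fin]
  omega

lemma gp_inter_eq_empty {X Y : Finset (Fin n)} (h : gp X Y)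
    (hc : X.card + Y.card < n) : X ∩ Y = ∅ := by
  rcases h with h | h
  · exact h
  · exact absurd (card_le_of_union_univ h) (by omega)

lemma genPos_iff (hb2 : n < 2*b) (hab : a + b + 1 ≤ n)
    (f g : Flag2 n a b) :
    GenPos f g ↔ f.1.2 ∪ g.1.2 = Finset.univ ∧ f.1.1 ∩ g.1.2 = ∅ ∧ g.1.1 ∩ f.1.2 = ∅ := by
  obtain ⟨⟨A, B⟩, hABs, hA, hB⟩ := f
  obtain ⟨⟨C, D⟩, hCDs, hC, hD⟩ := g
  simp only [GenPos] at *
  dsimp only at hABs hA hB hCDs hC hD ⊢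
  constructor
  · rintro ⟨h1, h2, h3, h4⟩
    refine ⟨?_, gp_inter_eq_empty h2 (by omega), gp_inter_eq_empty (gp_comm h3) (by omega)⟩
    rcases h4 with h | h
    · exfalso
      have hd : Disjoint B D := Finset.disjoint_iff_inter_eq_empty.mpr h
      have := Finset.card_union_of_disjoint hd
      have h5 : (B ∪ D).card ≤ n := by
        simpa using Finset.card_le_univ (B ∪ D)
      omega
    · exact h
  · rintro ⟨h1, h2, h3⟩
    refine ⟨Or.inl ?_, Or.inl h2, Or.inl (by rwa [Finset.inter_comm] at h3), Or.inr h1⟩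
    apply Finset.eq_empty_of_forall_notMem
    intro x hx
    simp only [Finset.mem_inter] at hx
    have : x ∈ C ∩ B := Finset.mem_inter.mpr ⟨hx.2, hABs.subset hx.1⟩
    rw [h3] at this; exact absurd this (Finset.notMem_empty x)

lemma not_genPos_self (ha : 1 ≤ a) (hb : b ≤ n) (f : Flag2 n a b) : ¬ GenPos f f := by
  rintro ⟨h1, -, -, -⟩
  have hA := f.2.2.1
  rcases h1 with h | h
  · rw [Finset.inter_self] at h
    have := Finset.card_eq_zero.mpr h
    omega
  · rw [Finset.union_self] at h
    have : f.1.1.card = n := by rw [h, Finset.card_univ, Fintype.card_fin]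
    have hB := f.2.2.2
    have := Finset.card_lt_card f.2.1
    omega

lemma genPos_iff_adj (ha : 1 ≤ a) (hb : b ≤ n) (hlt : a < b) (f g : Flag2 n a b) :
    GenPos f g ↔ (GPGraph n a b).Adj f g := by
  constructor
  · intro h
    show f ≠ g ∧ GenPos f g
    refine ⟨?_, h⟩
    rintro rfl
    exact not_genPos_self ha hb f h
  · exact fun h => (show f ≠ g ∧ GenPos f g from h).2

lemma Nset_card_map (ha : 1 ≤ a) (hb : b ≤ n) (hlt : a < b)
    (ρ : GPGraph n a b ≃g GPGraph n a b) (f g : Flag2 n a b) :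
    (Nset (ρ f) (ρ g)).card = (Nset f g).card := by
  have himg : Nset (ρ f) (ρ g) = (Nset f g).image ρ := by
    ext h
    simp only [Nset, Finset.mem_image, Finset.mem_filter, Finset.mem_univ, true_and]
    constructor
    · rintro ⟨h1, h2⟩
      refine ⟨ρ.symm h, ⟨?_, ?_⟩, by simp⟩
      · rw [genPos_iff_adj ha hb hlt]
        have := (genPos_iff_adj ha hb hlt (ρ f) h).mp h1
        have h3 := ρ.symm.map_adj_iff.mpr this
        simpa using h3
      · rw [genPos_iff_adj ha hb hlt]
        have := (genPos_iff_adj ha hb hlt (ρ g) h).mp h2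
        have h3 := ρ.symm.map_adj_iff.mpr this
        simpa using h3
    · rintro ⟨h', ⟨h1, h2⟩, rfl⟩
      constructor
      · rw [genPos_iff_adj ha hb hlt]
        exact ρ.map_adj_iff.mpr ((genPos_iff_adj ha hb hlt f h').mp h1)
      · rw [genPos_iff_adj ha hb hlt]
        exact ρ.map_adj_iff.mpr ((genPos_iff_adj ha hb hlt g h').mp h2)
  rw [himg]
  exact Finset.card_image_of_injective _ ρ.injective

end aux

section count
variable {n a b : ℕ}

lemma Nset_card_eq (hb2 : n < 2*b) (hab : a + b + 1 ≤ n) (hlt : a < b)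
    (f g : Flag2 n a b) :
    (Nset f g).card =
      ((((f.1.2 ∪ g.1.2)ᶜ).powersetCard a) ×ˢ
       ((Finset.univ.powersetCard b).filter
        (fun D => (f.1.2 ∩ g.1.2)ᶜ ⊆ D ∧ D ∩ (f.1.1 ∪ g.1.1) = ∅))).card := by
  apply Finset.card_bij (fun h _ => (h.1.1, h.1.2))
  · intro h hh
    simp only [Nset, Finset.mem_filter, Finset.mem_univ, true_and] at hh
    obtain ⟨h1, h2⟩ := hh
    rw [genPos_iff hb2 hab] at h1 h2
    obtain ⟨hu1, he1, hc1⟩ := h1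
    obtain ⟨hu2, he2, hc2⟩ := h2
    rw [Finset.eq_univ_iff_forall] at hu1 hu2
    rw [Finset.eq_empty_iff_forall_notMem] at he1 hc1 he2 hc2
    simp only [Finset.mem_inter, Finset.mem_union] at *
    rw [Finset.mem_product, Finset.mem_powersetCard, Finset.mem_filter,
      Finset.mem_powersetCard]
    refine ⟨⟨?_, h.2.2.1⟩, ⟨Finset.subset_univ _, h.2.2.2⟩, ?_, ?_⟩
    · intro x hx
      simp only [Finset.mem_compl, Finset.mem_union]
      push_neg
      exact ⟨fun hxB => hc1 x ⟨hx, hxB⟩, fun hxB => hc2 x ⟨hx, hxB⟩⟩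
    · intro x hx
      simp only [Finset.mem_compl, Finset.mem_inter] at hx
      rcases hu1 x with h | h
      · rcases hu2 x with h' | h'
        · exact absurd ⟨h, h'⟩ hx
        · exact h'
      · exact h
    · rw [Finset.eq_empty_iff_forall_notMem]
      rintro x hx
      simp only [Finset.mem_inter, Finset.mem_union] at hx
      rcases hx.2 with h | h
      · exact he1 x ⟨h, hx.1⟩
      · exact he2 x ⟨h, hx.1⟩
  · intro h1 hh1 h2 hh2 heq
    simp only [Prod.mk.injEq] at heq
    exact Subtype.ext (Prod.ext heq.1 heq.2)
  · rintro ⟨C, D⟩ hCD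
    rw [Finset.mem_product, Finset.mem_powersetCard, Finset.mem_filter,
      Finset.mem_powersetCard] at hCD
    obtain ⟨⟨hCsub, hCcard⟩, ⟨-, hDcard⟩, hDsub, hDe⟩ := hCD
    have hCD' : C ⊂ D := by
      rw [Finset.ssubset_iff_subset_ne]
      constructor
      · intro x hx
        apply hDsub
        have := hCsub hx
        simp only [Finset.mem_compl, Finset.mem_union] at this ⊢
        simp only [Finset.mem_inter]
        tauto
      · intro hEq
        rw [hEq, hDcard] at hCcard
        omega
    refine ⟨⟨(C, D), hCD', hCcard, hDcard⟩, ?_, rfl⟩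
    simp only [Nset, Finset.mem_filter, Finset.mem_univ, true_and]
    rw [genPos_iff hb2 hab, genPos_iff hb2 hab]
    rw [Finset.eq_empty_iff_forall_notMem] at hDe
    constructor
    · refine ⟨?_, ?_, ?_⟩
      · rw [Finset.eq_univ_iff_forall]
        intro x
        by_cases hx : x ∈ f.1.2
        · exact Finset.mem_union.mpr (Or.inl hx)
        · refine Finset.mem_union.mpr (Or.inr (hDsub ?_))
          simp only [Finset.mem_compl, Finset.mem_inter]
          tauto
      · rw [Finset.eq_empty_iff_forall_notMem]
        intro x hx
        simp only [Finset.mem_inter] at hx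
        exact hDe x (Finset.mem_inter.mpr ⟨hx.2, Finset.mem_union.mpr (Or.inl hx.1)⟩)
      · rw [Finset.eq_empty_iff_forall_notMem]
        intro x hx
        simp only [Finset.mem_inter] at hx
        have := hCsub hx.1
        simp only [Finset.mem_compl, Finset.mem_union] at this
        exact this (Or.inl hx.2)
    · refine ⟨?_, ?_, ?_⟩
      · rw [Finset.eq_univ_iff_forall]
        intro x
        by_cases hx : x ∈ g.1.2
        · exact Finset.mem_union.mpr (Or.inl hx)
        · refine Finset.mem_union.mpr (Or.inr (hDsub ?_))
          simp only [Finset.mem_compl, Finset.mem_inter]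
          tauto
      · rw [Finset.eq_empty_iff_forall_notMem]
        intro x hx
        simp only [Finset.mem_inter] at hx
        exact hDe x (Finset.mem_inter.mpr ⟨hx.2, Finset.mem_union.mpr (Or.inr hx.1)⟩)
      · rw [Finset.eq_empty_iff_forall_notMem]
        intro x hx
        simp only [Finset.mem_inter] at hx
        have := hCsub hx.1
        simp only [Finset.mem_compl, Finset.mem_union] at this
        exact this (Or.inr hx.2)

end count

section count2
variable {n a b : ℕ}

lemma card_D_eq (hb2 : n < 2*b) (hbn : b ≤ n) (B S : Finset (Fin n))
    (hB : B.card = b) (hS : S ⊆ B) :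
    ((Finset.univ.powersetCard b).filter (fun D => Bᶜ ⊆ D ∧ D ∩ S = ∅)).card
      = ((B \ S).powersetCard (2*b - n)).card := by
  apply Finset.card_bij (fun D _ => D ∩ B)
  · intro D hD
    rw [Finset.mem_filter, Finset.mem_powersetCard] at hD
    obtain ⟨⟨-, hDcard⟩, hBc, hDS⟩ := hD
    rw [Finset.mem_powersetCard]
    constructor
    · intro x hx
      rw [Finset.mem_inter] at hx
      rw [Finset.mem_sdiff]
      refine ⟨hx.2, fun hxS => ?_⟩
      have : x ∈ D ∩ S := Finset.mem_inter.mpr ⟨hx.1, hxS⟩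
      rw [hDS] at this; exact absurd this (Finset.notMem_empty x)
    · have hsd : D \ B = Bᶜ := by
        ext x
        simp only [Finset.mem_sdiff, Finset.mem_compl]
        exact ⟨fun h => h.2, fun h => ⟨hBc (Finset.mem_compl.mpr h), h⟩⟩
      have h1 := Finset.card_inter_add_card_sdiff D B
      rw [hsd, Finset.card_compl, Fintype.card_fin, hB, hDcard] at h1
      omega
  · intro D1 h1 D2 h2 heq
    rw [Finset.mem_filter, Finset.mem_powersetCard] at h1 h2
    ext x
    by_cases hx : x ∈ B
    · constructor
      · intro hD; have : x ∈ D2 ∩ B := heq ▸ Finset.mem_inter.mpr ⟨hD, hx⟩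
        exact (Finset.mem_inter.mp this).1
      · intro hD; have : x ∈ D1 ∩ B := heq ▸ Finset.mem_inter.mpr ⟨hD, hx⟩
        exact (Finset.mem_inter.mp this).1
    · have m1 : x ∈ D1 := h1.2.1 (Finset.mem_compl.mpr hx)
      have m2 : x ∈ D2 := h2.2.1 (Finset.mem_compl.mpr hx)
      exact ⟨fun _ => m2, fun _ => m1⟩
  · intro E hE
    rw [Finset.mem_powersetCard] at hE
    obtain ⟨hEsub, hEcard⟩ := hE
    have hEB : E ⊆ B := hEsub.trans (Finset.sdiff_subset)
    refine ⟨E ∪ Bᶜ, ?_, ?_⟩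
    · rw [Finset.mem_filter, Finset.mem_powersetCard]
      refine ⟨⟨Finset.subset_univ _, ?_⟩, Finset.subset_union_right, ?_⟩
      · have hdisj : Disjoint E Bᶜ := by
          rw [Finset.disjoint_iff_inter_eq_empty]
          ext x
          simp only [Finset.mem_inter, Finset.mem_compl, Finset.notMem_empty, iff_false]
          rintro ⟨h1, h2⟩
          exact h2 (hEB h1)
        rw [Finset.card_union_of_disjoint hdisj, hEcard, Finset.card_compl,
          Fintype.card_fin, hB]
        omega
      · rw [Finset.eq_empty_iff_forall_notMem]
        intro x hx
        simp only [Finset.mem_inter, Finset.mem_union, Finset.mem_compl] at hx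
        obtain ⟨h1 | h1, h2⟩ := hx
        · have := hEsub h1
          rw [Finset.mem_sdiff] at this
          exact this.2 h2
        · exact h1 (hS h2)
    · ext x
      simp only [Finset.mem_inter, Finset.mem_union, Finset.mem_compl]
      constructor
      · rintro ⟨h1 | h1, h2⟩
        · exact h1
        · exact absurd h2 h1
      · intro h; exact ⟨Or.inl h, hEB h⟩

lemma Nset_card_same (ha : 1 ≤ a) (hb2 : n < 2*b) (hab : a + b + 1 ≤ n)
    (f g : Flag2 n a b) (hBB : f.1.2 = g.1.2) (hA : (f.1.1 ∪ g.1.1).card = a + 1) :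
    (Nset f g).card = (n - b).choose a * (b - (a+1)).choose (2*b - n) := by
  have hbn : b ≤ n := by omega
  have hlt : a < b := by omega
  rw [Nset_card_eq hb2 hab hlt, Finset.card_product]
  have e1 : f.1.2 ∪ g.1.2 = f.1.2 := by rw [← hBB, Finset.union_self]
  have e2 : f.1.2 ∩ g.1.2 = f.1.2 := by rw [← hBB, Finset.inter_self]
  rw [e1, e2]
  have hSsub : f.1.1 ∪ g.1.1 ⊆ f.1.2 :=
    Finset.union_subset f.2.1.subset (hBB ▸ g.2.1.subset)
  rw [card_D_eq hb2 hbn _ _ f.2.2.2 hSsub]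
  rw [Finset.card_powersetCard, Finset.card_powersetCard,
    Finset.card_compl, Fintype.card_fin, f.2.2.2,
    Finset.card_sdiff_of_subset hSsub, f.2.2.2, hA]

end count2
lemma diag_mono (k x y : ℕ) : x.choose y ≤ (x+k).choose (y+k) := by
  induction k with
  | zero => simp
  | succ k ih =>
    have : (x+(k+1)).choose (y+(k+1)) = (x+k).choose (y+k) + (x+k).choose (y+k+1) := by
      show (x+k+1).choose (y+k+1) = _
      rw [Nat.choose_succ_succ]
    omega

lemma key_strict (a p b : ℕ) (ha : 1 ≤ a) (hap : a + 1 ≤ p) (hpb : p + 1 ≤ b) (hb2p : b < 2*p) :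
    (p-1).choose a * (b-a-1).choose (b-p-1) < p.choose a * (b-a-1).choose (b-p) := by
  set q := b - a - 1 with hq
  set t := b - p with ht
  have ht1 : 1 ≤ t := by omega
  have htq : t ≤ q := by omega
  have htp : t < p := by omega
  -- ★1 : C(q,t)*t = C(q,t-1)*(p-a)
  have h1 : q.choose t * t = q.choose (t-1) * (p-a) := by
    have := Nat.choose_succ_right_eq q (t-1)
    have e1 : t - 1 + 1 = t := by omega
    have e2 : q - (t-1) = p - a := by omega
    rw [e1, e2] at this
    exact this
  -- ★2 : p * C(p-1,a) = C(p,a)*(p-a)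
  have h2 : p * (p-1).choose a = p.choose a * (p-a) := by
    have hs := Nat.add_one_mul_choose_eq (p-1) a
    have e1 : p - 1 + 1 = p := by omega
    rw [e1] at hs
    have hr := Nat.choose_succ_right_eq p a
    omega
  have hc1 : 0 < p.choose a := Nat.choose_pos (by omega)
  have hc2 : 0 < q.choose t := Nat.choose_pos htq
  have hpa : 0 < p - a := by omega
  have key : ((p-1).choose a * q.choose (t-1)) * (p * (p-a)) <
      (p.choose a * q.choose t) * (p * (p-a)) := by
    have lhs_eq : ((p-1).choose a * q.choose (t-1)) * (p * (p-a)) =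
        (p * (p-1).choose a) * (q.choose (t-1) * (p-a)) := by ring
    rw [lhs_eq, h2, ← h1]
    have hX : 0 < p.choose a * q.choose t * (p-a) := Nat.mul_pos (Nat.mul_pos hc1 hc2) hpa
    nlinarith [hX, htp]
  exact Nat.lt_of_mul_lt_mul_right key

lemma key_ineq (a p b : ℕ) (ha : 1 ≤ a) (hap : a + 1 ≤ p) (hpb : p + 1 ≤ b) (hb2p : b < 2*p)
    (d : ℕ) (hd1 : 1 ≤ d) (hd2 : p + d ≤ b) :
    (p - d).choose a * (b - d - a).choose (b - d - p) < p.choose a * (b - a - 1).choose (b - p) := by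
  have m1 : (p - d).choose a ≤ (p-1).choose a := Nat.choose_le_choose a (by omega)
  have m2 : (b - d - a).choose (b - d - p) ≤ (b-a-1).choose (b-p-1) := by
    have := diag_mono (d-1) (b-d-a) (b-d-p)
    have e1 : b - d - a + (d-1) = b - a - 1 := by omega
    have e2 : b - d - p + (d-1) = b - p - 1 := by omega
    rwa [e1, e2] at this
  calc (p - d).choose a * (b - d - a).choose (b - d - p)
      ≤ (p-1).choose a * (b-a-1).choose (b-p-1) := Nat.mul_le_mul m1 m2
    _ < p.choose a * (b-a-1).choose (b-p) := key_strict a p b ha hap hpb hb2p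

section diff
variable {n a b : ℕ}

lemma Nset_card_diff (ha : 1 ≤ a) (ha2 : 2*a < n) (hb2 : n < 2*b) (hb3 : 3*b < 2*n)
    (hab : a + b + 1 ≤ n) (f g : Flag2 n a b) (hBB : f.1.2 ≠ g.1.2) :
    (Nset f g).card < (n - b).choose a * (b - (a+1)).choose (2*b - n) := by
  have hbn : b ≤ n := by omega
  have hlt : a < b := by omega
  have hK : 0 < (n - b).choose a * (b - (a+1)).choose (2*b - n) :=
    Nat.mul_pos (Nat.choose_pos (by omega)) (Nat.choose_pos (by omega))
  rw [Nset_card_eq hb2 hab hlt, Finset.card_product]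
  obtain ⟨⟨A, B⟩, hABs, hA, hB⟩ := f
  obtain ⟨⟨A', B'⟩, hABs', hA', hB'⟩ := g
  dsimp only at hABs hA hB hABs' hA' hB' hBB ⊢
  have hmb : (B ∩ B').card < b := by
    have hsub : B ∩ B' ⊆ B := Finset.inter_subset_left
    have hne : B ∩ B' ≠ B := by
      intro hEq
      apply hBB
      have hBB' : B ⊆ B' := by
        intro x hx
        have : x ∈ B ∩ B' := by rw [hEq]; exact hx
        exact (Finset.mem_inter.mp this).2
      exact Finset.eq_of_subset_of_card_le hBB' (by omega)
    have := Finset.card_lt_card (Finset.ssubset_iff_subset_ne.mpr ⟨hsub, hne⟩)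
    omega
  have hmn : (B ∩ B').card ≤ n := by
    simpa using Finset.card_le_univ (B ∩ B')
  have hu : (B ∪ B').card + (B ∩ B').card = 2*b := by
    have := Finset.card_union_add_card_inter B B'
    omega
  have hun : (B ∪ B').card ≤ n := by
    simpa using Finset.card_le_univ (B ∪ B')
  have hc1 : ((B ∪ B')ᶜ.powersetCard a).card = (n - (B ∪ B').card).choose a := by
    rw [Finset.card_powersetCard, Finset.card_compl, Fintype.card_fin]
  rw [hc1]
  rcases Finset.eq_empty_or_nonempty
      ((Finset.univ.powersetCard b).filter
        (fun D => (B ∩ B')ᶜ ⊆ D ∧ D ∩ (A ∪ A') = ∅)) with hDe | ⟨D₀, hD₀⟩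
  · rw [hDe]
    simpa using hK
  · rw [Finset.mem_filter, Finset.mem_powersetCard] at hD₀
    obtain ⟨⟨-, hD₀card⟩, hD₀K, hD₀S⟩ := hD₀
    have hnm : n - (B ∩ B').card ≤ b := by
      have h1 : (B ∩ B')ᶜ.card ≤ D₀.card := Finset.card_le_card hD₀K
      rw [Finset.card_compl, Fintype.card_fin, hD₀card] at h1
      exact h1
    have hAK : A ⊆ B ∩ B' := by
      intro x hx
      by_contra hxK
      have hxD : x ∈ D₀ := hD₀K (Finset.mem_compl.mpr hxK)
      have : x ∈ D₀ ∩ (A ∪ A') :=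
        Finset.mem_inter.mpr ⟨hxD, Finset.mem_union.mpr (Or.inl hx)⟩
      rw [hD₀S] at this
      exact absurd this (Finset.notMem_empty x)
    have hDbound : ((Finset.univ.powersetCard b).filter
        (fun D => (B ∩ B')ᶜ ⊆ D ∧ D ∩ (A ∪ A') = ∅)).card
        ≤ ((B ∩ B').card - a).choose (b - (n - (B ∩ B').card)) := by
      have htgt : (((B ∩ B') \ A).powersetCard (b - (n - (B ∩ B').card))).card
          = ((B ∩ B').card - a).choose (b - (n - (B ∩ B').card)) := by
        rw [Finset.card_powersetCard, Finset.card_sdiff_of_subset hAK, hA]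
      rw [← htgt]
      apply Finset.card_le_card_of_injOn (fun D => D ∩ (B ∩ B'))
      · intro D hD
        rw [Finset.mem_coe, Finset.mem_filter, Finset.mem_powersetCard] at hD
        obtain ⟨⟨-, hDcard⟩, hDK, hDS⟩ := hD
        rw [Finset.mem_coe, Finset.mem_powersetCard]
        constructor
        · intro x hx
          rw [Finset.mem_inter] at hx
          rw [Finset.mem_sdiff]
          refine ⟨hx.2, fun hxA => ?_⟩
          have : x ∈ D ∩ (A ∪ A') :=
            Finset.mem_inter.mpr ⟨hx.1, Finset.mem_union.mpr (Or.inl hxA)⟩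
          rw [hDS] at this
          exact absurd this (Finset.notMem_empty x)
        · have hsd : D \ (B ∩ B') = (B ∩ B')ᶜ := by
            ext x
            simp only [Finset.mem_sdiff, Finset.mem_compl]
            exact ⟨fun h => h.2, fun h => ⟨hDK (Finset.mem_compl.mpr h), h⟩⟩
          have h1 := Finset.card_inter_add_card_sdiff D (B ∩ B')
          rw [hsd, Finset.card_compl, Fintype.card_fin, hDcard] at h1
          dsimp only
          omega
      · intro D1 h1 D2 h2 heq
        rw [Finset.mem_coe, Finset.mem_filter, Finset.mem_powersetCard] at h1 h2
        have heq' : D1 ∩ (B ∩ B') = D2 ∩ (B ∩ B') := heq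
        ext x
        by_cases hx : x ∈ B ∩ B'
        · constructor
          · intro hD
            have : x ∈ D2 ∩ (B ∩ B') := heq' ▸ Finset.mem_inter.mpr ⟨hD, hx⟩
            exact (Finset.mem_inter.mp this).1
          · intro hD
            have : x ∈ D1 ∩ (B ∩ B') := heq'.symm ▸ Finset.mem_inter.mpr ⟨hD, hx⟩
            exact (Finset.mem_inter.mp this).1
        · have m1 : x ∈ D1 := h1.2.1 (Finset.mem_compl.mpr hx)
          have m2 : x ∈ D2 := h2.2.1 (Finset.mem_compl.mpr hx)
          exact ⟨fun _ => m2, fun _ => m1⟩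
    have e1 : n - (B ∪ B').card = (n - b) - (b - (B ∩ B').card) := by omega
    have e2 : (B ∩ B').card - a = b - (b - (B ∩ B').card) - a := by omega
    have e3 : b - (n - (B ∩ B').card) = b - (b - (B ∩ B').card) - (n - b) := by omega
    have e4 : b - (a+1) = b - a - 1 := by omega
    have e5 : 2*b - n = b - (n - b) := by omega
    calc (n - (B ∪ B').card).choose a *
          ((Finset.univ.powersetCard b).filter
            (fun D => (B ∩ B')ᶜ ⊆ D ∧ D ∩ (A ∪ A') = ∅)).card
        ≤ ((n - b) - (b - (B ∩ B').card)).choose a *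
          (b - (b - (B ∩ B').card) - a).choose (b - (b - (B ∩ B').card) - (n - b)) := by
          rw [← e1, ← e2, ← e3]
          exact Nat.mul_le_mul_left _ hDbound
      _ < (n - b).choose a * (b - a - 1).choose (b - (n - b)) :=
          key_ineq a (n - b) b ha (by omega) (by omega) (by omega)
            (b - (B ∩ B').card) (by omega) (by omega)
      _ = (n - b).choose a * (b - (a+1)).choose (2*b - n) := by rw [e4, e5]

end diff

section chain
variable {n a b : ℕ}

lemma onestep (ha : 1 ≤ a) (ha2 : 2*a < n) (hb2 : n < 2*b) (hb3 : 3*b < 2*n)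
    (hab : a + b + 1 ≤ n) (ρ : GPGraph n a b ≃g GPGraph n a b)
    (f g : Flag2 n a b) (hBB : f.1.2 = g.1.2) (hA : (f.1.1 ∪ g.1.1).card = a + 1) :
    (ρ f).1.2 = (ρ g).1.2 := by
  have hbn : b ≤ n := by omega
  have hlt : a < b := by omega
  by_contra hne
  have h1 := Nset_card_same ha hb2 hab f g hBB hA
  have h2 := Nset_card_map ha hbn hlt ρ f g
  have h3 := Nset_card_diff ha ha2 hb2 hb3 hab (ρ f) (ρ g) hne
  omega

lemma chain (ha : 1 ≤ a) (ha2 : 2*a < n) (hb2 : n < 2*b) (hb3 : 3*b < 2*n)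
    (hab : a + b + 1 ≤ n) (ρ : GPGraph n a b ≃g GPGraph n a b) :
    ∀ k (f g : Flag2 n a b), (f.1.1 \ g.1.1).card = k → f.1.2 = g.1.2 →
      (ρ f).1.2 = (ρ g).1.2 := by
  intro k
  induction k with
  | zero =>
    intro f g hk hBB
    have hsub : f.1.1 ⊆ g.1.1 := by
      rw [← Finset.sdiff_eq_empty_iff_subset]
      exact Finset.card_eq_zero.mp hk
    have : f.1.1 = g.1.1 :=
      Finset.eq_of_subset_of_card_le hsub (by rw [f.2.2.1, g.2.2.1])
    have : f = g := Subtype.ext (Prod.ext this hBB)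
    rw [this]
  | succ k ih =>
    intro f g hk hBB
    have hx : (f.1.1 \ g.1.1).Nonempty := by
      rw [← Finset.card_pos, hk]; omega
    obtain ⟨x, hxmem⟩ := hx
    have hcards : f.1.1.card = g.1.1.card := by rw [f.2.2.1, g.2.2.1]
    have hy : (g.1.1 \ f.1.1).Nonempty := by
      rw [← Finset.card_pos, ← Finset.card_sdiff_comm hcards, hk]; omega
    obtain ⟨y, hymem⟩ := hy
    rw [Finset.mem_sdiff] at hxmem hymem
    have hyB : y ∈ f.1.2 := by
      rw [hBB]; exact g.2.1.subset hymem.1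
    have hxA : x ∈ f.1.1 := hxmem.1
    -- the intermediate flag
    have hcard1 : (insert y (f.1.1.erase x)).card = a := by
      rw [Finset.card_insert_of_notMem (fun hyy => hymem.2 (Finset.mem_of_mem_erase hyy)),
        Finset.card_erase_of_mem hxA, f.2.2.1]
      omega
    have hsub1 : insert y (f.1.1.erase x) ⊂ f.1.2 := by
      rw [Finset.ssubset_iff_subset_ne]
      constructor
      · intro z hz
        rcases Finset.mem_insert.mp hz with rfl | hz
        · exact hyB
        · exact f.2.1.subset (Finset.mem_of_mem_erase hz)
      · intro hEq
        have := f.2.2.2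
        rw [← hEq, hcard1] at this
        omega
    set f' : Flag2 n a b := ⟨(insert y (f.1.1.erase x), f.1.2), hsub1, hcard1, f.2.2.2⟩
      with hf'
    have hstep : (ρ f).1.2 = (ρ f').1.2 := by
      apply onestep ha ha2 hb2 hb3 hab ρ f f' rfl
      have hU : f.1.1 ∪ f'.1.1 = insert y f.1.1 := by
        ext z
        simp only [hf', Finset.mem_union, Finset.mem_insert, Finset.mem_erase]
        constructor
        · rintro (h | h | ⟨-, h⟩)
          · exact Or.inr h
          · exact Or.inl h
          · exact Or.inr h
        · rintro (rfl | h)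
          · exact Or.inr (Or.inl rfl)
          · exact Or.inl h
      rw [hU, Finset.card_insert_of_notMem hymem.2, f.2.2.1]
    have hrest : (ρ f').1.2 = (ρ g).1.2 := by
      apply ih f' g _ hBB
      have : f'.1.1 \ g.1.1 = (f.1.1 \ g.1.1).erase x := by
        ext z
        simp only [hf', Finset.mem_sdiff, Finset.mem_erase, Finset.mem_insert,
          Finset.mem_erase]
        constructor
        · rintro ⟨rfl | ⟨hzx, hzf⟩, hzg⟩
          · exact absurd hymem.1 hzg
          · exact ⟨hzx, hzf, hzg⟩
        · rintro ⟨hzx, hzf, hzg⟩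
          exact ⟨Or.inr ⟨hzx, hzf⟩, hzg⟩
      rw [this, Finset.card_erase_of_mem (Finset.mem_sdiff.mpr hxmem), hk]
      omega
    rw [hstep, hrest]

end chain


/-- Proposition 3.4: for `a < n/2 < b < 2n/3`, `a + b + 1 ≤ n`, the partition of the
flags of type `{a,b}` according to their `b`-set is a system of blocks for
`Aut(Γ(n,T))`: every automorphism maps `F^(T|B)` onto some `F^(T|D)` with `|D| = b`. -/
theorem blocks_bset (n a b : ℕ) (ha : 1 ≤ a) (ha2 : 2 * a < n)
    (hb2 : n < 2 * b) (hb3 : 3 * b < 2 * n) (hab : a + b + 1 ≤ n)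
    (ρ : GPGraph n a b ≃g GPGraph n a b)
    (B : Finset (Fin n)) (hB : B.card = b) :
    ∃ D : Finset (Fin n), D.card = b ∧
      (Finset.univ.filter fun f : Flag2 n a b => f.1.2 = B).image (fun f => ρ f) =
        Finset.univ.filter fun f : Flag2 n a b => f.1.2 = D := by
  have hlt : a < b := by omega
  obtain ⟨A₀, hA₀sub, hA₀card⟩ := Finset.exists_subset_card_eq (s := B) (n := a) (by omega)
  have hss : A₀ ⊂ B := by
    rw [Finset.ssubset_iff_subset_ne]
    refine ⟨hA₀sub, fun hEq => ?_⟩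
    rw [hEq, hB] at hA₀card
    omega
  set f₀ : Flag2 n a b := ⟨(A₀, B), hss, hA₀card, hB⟩ with hf₀
  refine ⟨(ρ f₀).1.2, (ρ f₀).2.2.2, ?_⟩
  ext g'
  simp only [Finset.mem_image, Finset.mem_filter, Finset.mem_univ, true_and]
  constructor
  · rintro ⟨f, hf, rfl⟩
    exact chain ha ha2 hb2 hb3 hab ρ _ f f₀ rfl (by rw [hf])
  · intro hg'
    refine ⟨ρ.symm g', ?_, by simp⟩
    have := chain ha ha2 hb2 hb3 hab ρ.symm _ g' (ρ f₀) rfl hg'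
    have h2 : (ρ.symm (ρ f₀)) = f₀ := ρ.symm_apply_apply f₀
    rw [h2] at this
    exact this
end

section
/- Let T = {a,b} ⊆ [n-1] with a < b and a + b = n. In Γ(n,T), a flag {A,B} (A ⊂ B, |A| = a, |B| = b) is adjacent to a flag {C,D} if and only if C = [n] \ B and D = [n] \ A. Consequently Γ(n,T) is a perfect matching: every vertex has exactly one neighbor. -/
open Finset

lemma gp_eq_compl {n : ℕ} {X Y : Finset (Fin n)} (hc : X.card + Y.card = n)
    (h : gp X Y) : Y = Xᶜ := by
  have hcompl : (Xᶜ : Finset (Fin n)).card = n - X.card := by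
    simp [Finset.card_compl]
  have hdisj : X ∩ Y = ∅ := by
    rcases h with h | h
    · exact h
    · have := Finset.card_union_add_card_inter X Y
      rw [h] at this
      simp only [Finset.card_univ, Fintype.card_fin] at this
      have : (X ∩ Y).card = 0 := by omega
      exact Finset.card_eq_zero.mp this
  have hsub : Y ⊆ Xᶜ := by
    intro x hx
    simp only [Finset.mem_compl]
    intro hxX
    have : x ∈ X ∩ Y := Finset.mem_inter.mpr ⟨hxX, hx⟩
    simp [hdisj] at this
  exact Finset.eq_of_subset_of_card_le hsub (by omega)

/-- In the case `a + b = n`, a flag `{A,B}` is adjacent in `Γ(n,T)` exactly to the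
flag `{[n] \ B, [n] \ A}`; consequently `Γ(n,T)` is a perfect matching: every vertex
has exactly one neighbour. -/
theorem adj_iff_compl (n a b : ℕ) (ha : 1 ≤ a) (hab : a < b) (hn : a + b = n) :
    (∀ f g : Flag2 n a b,
      (GPGraph n a b).Adj f g ↔ (g.1.1 = f.1.2ᶜ ∧ g.1.2 = f.1.1ᶜ)) ∧
    ∀ f : Flag2 n a b, ∃! g : Flag2 n a b, (GPGraph n a b).Adj f g := by
  have key : ∀ f g : Flag2 n a b,
      (GPGraph n a b).Adj f g ↔ (g.1.1 = f.1.2ᶜ ∧ g.1.2 = f.1.1ᶜ) := by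
    rintro ⟨⟨A, B⟩, hAB, hA, hB⟩ ⟨⟨C, D⟩, hCD, hC, hD⟩
    have hAB' : A ⊂ B := hAB
    have hA' : A.card = a := hA
    have hB' : B.card = b := hB
    have hC' : C.card = a := hC
    have hD' : D.card = b := hD
    show ((_ : Flag2 n a b) ≠ _ ∧ _) ↔ (C = Bᶜ ∧ D = Aᶜ)
    constructor
    · rintro ⟨hne, h1, h2, h3, h4⟩
      have h2' : gp A D := h2
      have h3' : gp B C := h3
      exact ⟨gp_eq_compl (by omega) h3', gp_eq_compl (by omega) h2'⟩
    · rintro ⟨hCe, hDe⟩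
      subst hCe hDe
      have hABs : A ⊆ B := hAB'.subset
      have hAne : A ≠ Bᶜ := by
        intro h
        obtain ⟨x, hx⟩ := Finset.card_pos.mp (show 0 < A.card by omega)
        have hxB : x ∈ B := hABs hx
        have : x ∈ Bᶜ := h ▸ hx
        simp [hxB] at this
      refine ⟨?_, ?_, ?_, ?_, ?_⟩
      · intro h
        apply hAne
        have := congrArg (fun z : Flag2 n a b => z.1.1) h
        simpa using this
      · show gp A Bᶜ
        left
        rw [Finset.eq_empty_iff_forall_notMem]
        intro x hx
        simp only [Finset.mem_inter, Finset.mem_compl] at hx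
        exact hx.2 (hABs hx.1)
      · show gp A Aᶜ
        left; simp
      · show gp B Bᶜ
        right; simp
      · show gp B Aᶜ
        right
        rw [Finset.eq_univ_iff_forall]
        intro x
        simp only [Finset.mem_union, Finset.mem_compl]
        by_cases h : x ∈ A
        · exact Or.inl (hABs h)
        · exact Or.inr h
  refine ⟨key, fun f => ?_⟩
  have hAB : f.1.1 ⊂ f.1.2 := f.2.1
  have hA : f.1.1.card = a := f.2.2.1
  have hB : f.1.2.card = b := f.2.2.2
  have hflag : (f.1.2ᶜ : Finset (Fin n)) ⊂ f.1.1ᶜ ∧ (f.1.2ᶜ : Finset (Fin n)).card = a ∧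
      (f.1.1ᶜ : Finset (Fin n)).card = b := by
    refine ⟨?_, ?_, ?_⟩
    · rw [Finset.compl_ssubset_compl]; exact hAB
    · rw [Finset.card_compl, hB]; simp; omega
    · rw [Finset.card_compl, hA]; simp; omega
  refine ⟨⟨(f.1.2ᶜ, f.1.1ᶜ), hflag⟩, (key _ _).mpr ⟨rfl, rfl⟩, fun g hg => ?_⟩
  have := (key f g).mp hg
  exact Subtype.ext (Prod.ext this.1 this.2)
end

section
/- Let T = {a,b} ⊆ [n-1] with a < b and a + b = n, and let m = (1/2)·C(n,b)·C(b,a). Then Aut(Γ(n,T)) is isomorphic to the wreath product (S₂ × ⋯ × S₂) ⋊ S_m (i.e., S₂ ≀ S_m) of order 2^m · m!. -/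
open Finset

/-- The action of `Perm I` on `I → G` by permuting coordinates. -/
def permPiAut (I G : Type) [Group G] : Equiv.Perm I →* MulAut (I → G) where
  toFun σ :=
    { toFun := fun f => f ∘ σ.symm
      invFun := fun f => f ∘ σ
      left_inv := fun f => by ext i; simp
      right_inv := fun f => by ext i; simp
      map_mul' := fun f g => rfl }
  map_one' := by ext f i; rfl
  map_mul' := fun σ τ => by
    ext f i; simp [Equiv.Perm.mul_def, Equiv.symm_trans_apply]

/-- The wreath product `S₂ ≀ S_m`: base group `m` copies of `S₂`, with `S_m`
permuting the copies. -/
abbrev WreathS2 (m : ℕ) : Type :=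
  (Fin m → Equiv.Perm (Fin 2)) ⋊[permPiAut (Fin m) (Equiv.Perm (Fin 2))] Equiv.Perm (Fin m)

namespace AutMatch


def flip2 (I : Type) : Equiv.Perm (I × Fin 2) :=
  Equiv.prodCongr (Equiv.refl I) (Equiv.swap 0 1)

lemma flip2_apply {I : Type} (x : I × Fin 2) : flip2 I x = (x.1, Equiv.swap 0 1 x.2) := rfl

lemma perm2_comm : ∀ a b : Equiv.Perm (Fin 2), a * b = b * a := by decide

lemma perm2_comm' (a b : Equiv.Perm (Fin 2)) (j : Fin 2) : a (b j) = b (a j) :=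
  Equiv.ext_iff.mp (perm2_comm a b) j

def wrPerm {I : Type} (f : I → Equiv.Perm (Fin 2)) (σ : Equiv.Perm I) :
    Equiv.Perm (I × Fin 2) where
  toFun x := (σ x.1, f (σ x.1) x.2)
  invFun x := (σ.symm x.1, (f x.1).symm x.2)
  left_inv x := by simp
  right_inv x := by simp

def Phi (I : Type) :
    ((I → Equiv.Perm (Fin 2)) ⋊[permPiAut I (Equiv.Perm (Fin 2))] Equiv.Perm I) →*
      Equiv.Perm (I × Fin 2) where
  toFun x := wrPerm x.left x.right
  map_one' := by
    ext x
    · simp [wrPerm]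
    · simp [wrPerm]
  map_mul' x y := by
    ext z
    · simp [wrPerm, Equiv.Perm.mul_apply]
    · simp [wrPerm, Equiv.Perm.mul_apply, permPiAut]
      erw [SemidirectProduct.mul_left, SemidirectProduct.mul_right]
      simp [permPiAut, Equiv.Perm.mul_apply]

lemma Phi_injective (I : Type) : Function.Injective (Phi I) := by
  rw [injective_iff_map_eq_one]
  intro x hx
  have hr : x.right = 1 := by
    apply Equiv.ext
    intro i
    have := congrArg Prod.fst (Equiv.ext_iff.mp hx (i, 0))
    simpa [wrPerm, Phi] using this
  have hl : x.left = 1 := by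
    funext i
    apply Equiv.ext
    intro j
    have := congrArg Prod.snd (Equiv.ext_iff.mp hx (x.right.symm i, j))
    simpa [wrPerm, Phi] using this
  ext <;> simp [hl, hr]

lemma Phi_mem_centralizer {I : Type} (x) :
    Phi I x ∈ Subgroup.centralizer {flip2 I} := by
  rw [Subgroup.mem_centralizer_iff]
  rintro g rfl
  ext z
  · simp [Phi, wrPerm, flip2, Equiv.Perm.mul_apply]
  · simp [Phi, wrPerm, flip2, Equiv.Perm.mul_apply, perm2_comm' _ (Equiv.swap 0 1)]

lemma fst_const {I : Type} (σ : Equiv.Perm (I × Fin 2))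
    (hc : ∀ z, σ (flip2 I z) = flip2 I (σ z)) (i : I) (j : Fin 2) :
    (σ (i, j)).1 = (σ (i, 0)).1 := by
  fin_cases j
  · rfl
  · show (σ (i, 1)).1 = (σ (i, 0)).1
    have h1 : ((i : I), (1 : Fin 2)) = flip2 I (i, 0) := by simp [flip2_apply]
    rw [h1, hc, flip2_apply]

lemma symm_comm {I : Type} (σ : Equiv.Perm (I × Fin 2))
    (hc : ∀ z, σ (flip2 I z) = flip2 I (σ z)) (z) :
    σ.symm (flip2 I z) = flip2 I (σ.symm z) := by
  conv_lhs => rw [← σ.apply_symm_apply z]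
  rw [← hc, Equiv.symm_apply_apply]

lemma apply_symm_fst {I : Type} (σ : Equiv.Perm (I × Fin 2))
    (hc : ∀ z, σ (flip2 I z) = flip2 I (σ z)) (i : I) (j : Fin 2) :
    (σ ((σ.symm (i, 0)).1, j)).1 = i :=
  calc (σ ((σ.symm (i, 0)).1, j)).1
      = (σ ((σ.symm (i, 0)).1, (σ.symm (i, 0)).2)).1 := by
        rw [fst_const σ hc _ j, fst_const σ hc _ (σ.symm (i, 0)).2]
    _ = (σ (σ.symm (i, 0))).1 := by rw [Prod.mk.eta]
    _ = i := by rw [Equiv.apply_symm_apply]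

lemma apply_symm_fst' {I : Type} (σ : Equiv.Perm (I × Fin 2))
    (hc : ∀ z, σ (flip2 I z) = flip2 I (σ z)) (i : I) (j : Fin 2) :
    (σ.symm ((σ (i, 0)).1, j)).1 = i := by
  simpa using apply_symm_fst σ.symm (symm_comm σ hc) i j

lemma Phi_surjective {I : Type} (σ : Equiv.Perm (I × Fin 2))
    (hσ : σ ∈ Subgroup.centralizer {flip2 I}) : ∃ x, Phi I x = σ := by
  rw [Subgroup.mem_centralizer_iff] at hσ
  have hc : ∀ z, σ (flip2 I z) = flip2 I (σ z) := by
    intro z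
    have := Equiv.ext_iff.mp (hσ (flip2 I) rfl) z
    simpa [Equiv.Perm.mul_apply] using this.symm
  have hc' := symm_comm σ hc
  have hfst := fst_const σ hc
  have hfst' := fst_const σ.symm hc'
  refine ⟨⟨fun i =>
    { toFun := fun j => (σ ((σ.symm (i, 0)).1, j)).2
      invFun := fun j => (σ.symm (i, j)).2
      left_inv := fun j => ?_
      right_inv := fun j => ?_ },
    { toFun := fun i => (σ (i, 0)).1
      invFun := fun i => (σ.symm (i, 0)).1
      left_inv := fun i => ?_
      right_inv := fun i => ?_ }⟩, ?_⟩
  · show (σ.symm (i, (σ ((σ.symm (i, 0)).1, j)).2)).2 = j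
    have h1 : (σ ((σ.symm (i, 0)).1, j)).1 = i := apply_symm_fst σ hc i j
    calc (σ.symm (i, (σ ((σ.symm (i, 0)).1, j)).2)).2
        = (σ.symm ((σ ((σ.symm (i, 0)).1, j)).1, (σ ((σ.symm (i, 0)).1, j)).2)).2 := by
          rw [h1]
      _ = (σ.symm (σ ((σ.symm (i, 0)).1, j))).2 := by rw [Prod.mk.eta]
      _ = j := by rw [Equiv.symm_apply_apply]
  · show (σ ((σ.symm (i, 0)).1, (σ.symm (i, j)).2)).2 = j
    have h2 : (σ.symm (i, j)).1 = (σ.symm (i, 0)).1 := hfst' i j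
    calc (σ ((σ.symm (i, 0)).1, (σ.symm (i, j)).2)).2
        = (σ ((σ.symm (i, j)).1, (σ.symm (i, j)).2)).2 := by rw [h2]
      _ = (σ (σ.symm (i, j))).2 := by rw [Prod.mk.eta]
      _ = j := by rw [Equiv.apply_symm_apply]
  · show (σ.symm ((σ (i, 0)).1, 0)).1 = i
    exact apply_symm_fst' σ hc i 0
  · show (σ ((σ.symm (i, 0)).1, 0)).1 = i
    exact apply_symm_fst σ hc i 0
  · apply Equiv.ext
    intro z
    have hfsteq : (σ (z.1, 0)).1 = (σ z).1 :=
      calc (σ (z.1, 0)).1 = (σ (z.1, z.2)).1 := (hfst z.1 z.2).symm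
        _ = (σ z).1 := by rw [Prod.mk.eta]
    have h3 : (σ.symm ((σ (z.1, 0)).1, 0)).1 = z.1 := apply_symm_fst' σ hc z.1 0
    show ((σ (z.1, 0)).1, (σ ((σ.symm ((σ (z.1, 0)).1, 0)).1, z.2)).2) = σ z
    rw [h3, hfsteq]

noncomputable def wreathEquivCentralizer (I : Type) :
    ((I → Equiv.Perm (Fin 2)) ⋊[permPiAut I (Equiv.Perm (Fin 2))] Equiv.Perm I) ≃*
      Subgroup.centralizer {flip2 I} :=
  MulEquiv.ofBijective ((Phi I).codRestrict _ Phi_mem_centralizer)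
    ⟨fun x y h => Phi_injective I (congrArg Subtype.val h),
     fun z => by
      obtain ⟨x, hx⟩ := Phi_surjective z.1 z.2
      exact ⟨x, Subtype.ext hx⟩⟩



lemma fin2_cases (j : Fin 2) : j = 0 ∨ j = 1 := by fin_cases j <;> simp

/-- Automorphisms of a graph whose adjacency is `g = φ f` are exactly the
permutations commuting with `φ`. -/
def autEquivCentralizer {V : Type} (G : SimpleGraph V) (φ : Equiv.Perm V)
    (hadj : ∀ f g, G.Adj f g ↔ g = φ f) :
    (G ≃g G) ≃* Subgroup.centralizer {φ} where
  toFun σ := ⟨σ.toEquiv, by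
    rw [Subgroup.mem_centralizer_iff]
    intro g hg
    rw [Set.mem_singleton_iff] at hg
    rw [hg]
    apply Equiv.ext
    intro v
    show φ (σ v) = σ (φ v)
    have h1 : G.Adj v (φ v) := (hadj v (φ v)).mpr rfl
    have h2 : G.Adj (σ v) (σ (φ v)) := σ.map_adj_iff.mpr h1
    exact ((hadj _ _).mp h2).symm⟩
  invFun x :=
    { toEquiv := x.1
      map_rel_iff' := by
        intro f g
        have hcomm : ∀ v, φ (x.1 v) = x.1 (φ v) := fun v =>
          Equiv.ext_iff.mp (Subgroup.mem_centralizer_iff.mp x.2 φ rfl) v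
        rw [hadj, hadj]
        constructor
        · intro h
          apply x.1.injective
          rw [h, ← hcomm]
        · intro h
          rw [h, ← hcomm] }
  left_inv σ := rfl
  right_inv x := rfl
  map_mul' a b := rfl

/-- Centralizers are isomorphic when the permutations correspond under an equivalence. -/
def centralizerCongr {V W : Type} (e : V ≃ W) (φ : Equiv.Perm V) (ψ : Equiv.Perm W)
    (he : ∀ v, e (φ v) = ψ (e v)) :
    Subgroup.centralizer {φ} ≃* Subgroup.centralizer {ψ} := by
  have he' : ∀ w, e.symm (ψ w) = φ (e.symm w) := fun w => by
    apply e.injective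
    rw [he, e.apply_symm_apply, e.apply_symm_apply]
  exact
  { toFun := fun x => ⟨e.permCongr x.1, by
      have xcomm : ∀ v, φ (x.1 v) = x.1 (φ v) := fun v =>
        Equiv.ext_iff.mp (Subgroup.mem_centralizer_iff.mp x.2 φ rfl) v
      rw [Subgroup.mem_centralizer_iff]
      intro g hg
      rw [Set.mem_singleton_iff] at hg
      rw [hg]
      apply Equiv.ext
      intro w
      show ψ (e.permCongr x.1 w) = e.permCongr x.1 (ψ w)
      simp only [Equiv.permCongr_apply]
      rw [he', ← xcomm, he]⟩
    invFun := fun y => ⟨e.permCongr.symm y.1, by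
      have ycomm : ∀ w, ψ (y.1 w) = y.1 (ψ w) := fun w =>
        Equiv.ext_iff.mp (Subgroup.mem_centralizer_iff.mp y.2 ψ rfl) w
      rw [Subgroup.mem_centralizer_iff]
      intro g hg
      rw [Set.mem_singleton_iff] at hg
      rw [hg]
      apply Equiv.ext
      intro v
      show φ (e.permCongr.symm y.1 v) = e.permCongr.symm y.1 (φ v)
      simp only [Equiv.permCongr_symm_apply]
      rw [he, ← ycomm, he']⟩
    left_inv := fun x => Subtype.ext (e.permCongr.symm_apply_apply x.1)
    right_inv := fun y => Subtype.ext (e.permCongr.apply_symm_apply y.1)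
    map_mul' := fun x y => Subtype.ext (by
      apply Equiv.ext
      intro w
      simp [Equiv.Perm.mul_apply]) }

/-- Pairing up the elements of `V` along a fixed-point-free involution. -/
noncomputable def pairEquiv {V : Type} [Fintype V] [DecidableEq V] (φ : Equiv.Perm V)
    (hinv : ∀ v, φ (φ v) = v) (hne : ∀ v, φ v ≠ v) :
    V ≃ {v : V // Fintype.equivFin V v < Fintype.equivFin V (φ v)} × Fin 2 := by
  have key : ∀ v : V, ¬ Fintype.equivFin V v < Fintype.equivFin V (φ v) →
      Fintype.equivFin V (φ v) < Fintype.equivFin V (φ (φ v)) := by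
    intro v h
    rw [hinv]
    exact lt_of_le_of_ne (not_lt.mp h) (fun h2 => hne v ((Fintype.equivFin V).injective h2))
  exact
  { toFun := fun v =>
      if h : Fintype.equivFin V v < Fintype.equivFin V (φ v) then (⟨v, h⟩, 0)
      else (⟨φ v, key v h⟩, 1)
    invFun := fun x => if x.2 = 0 then x.1.1 else φ x.1.1
    left_inv := fun v => by
      by_cases h : Fintype.equivFin V v < Fintype.equivFin V (φ v)
      · simp [h]
      · simp [h, hinv]
    right_inv := fun x => by
      obtain ⟨⟨v, hv⟩, j⟩ := x
      have h2 : ¬ Fintype.equivFin V (φ v) < Fintype.equivFin V (φ (φ v)) := by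
        rw [hinv]
        exact not_lt.mpr (le_of_lt hv)
      have h3 : ¬ Fintype.equivFin V (φ v) < Fintype.equivFin V v :=
        not_lt.mpr (le_of_lt hv)
      rcases fin2_cases j with rfl | rfl
      · simp [hv]
      · simp [h2, h3, hinv] }

lemma pairEquiv_flip {V : Type} [Fintype V] [DecidableEq V] (φ : Equiv.Perm V)
    (hinv : ∀ v, φ (φ v) = v) (hne : ∀ v, φ v ≠ v) (v : V) :
    pairEquiv φ hinv hne (φ v) = flip2 _ (pairEquiv φ hinv hne v) := by
  by_cases h : Fintype.equivFin V v < Fintype.equivFin V (φ v)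
  · have h2 : ¬ Fintype.equivFin V (φ v) < Fintype.equivFin V (φ (φ v)) := by
      rw [hinv]
      exact not_lt.mpr (le_of_lt h)
    simp only [pairEquiv, Equiv.coe_fn_mk, dif_pos h, dif_neg h2]
    simp [flip2, hinv]
  · have h2 : Fintype.equivFin V (φ v) < Fintype.equivFin V (φ (φ v)) := by
      rw [hinv]
      exact lt_of_le_of_ne (not_lt.mp h) (fun h2 => hne v ((Fintype.equivFin V).injective h2))
    simp only [pairEquiv, Equiv.coe_fn_mk, dif_pos h2, dif_neg h]
    simp [flip2]

lemma card_pairs {V : Type} [Fintype V] [DecidableEq V] (φ : Equiv.Perm V)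
    (hinv : ∀ v, φ (φ v) = v) (hne : ∀ v, φ v ≠ v) :
    Fintype.card {v : V // Fintype.equivFin V v < Fintype.equivFin V (φ v)} =
      Fintype.card V / 2 := by
  have := Fintype.card_congr (pairEquiv φ hinv hne)
  rw [Fintype.card_prod, Fintype.card_fin] at this
  omega

lemma exists_flip_equiv {V : Type} [Fintype V] [DecidableEq V] (φ : Equiv.Perm V)
    (hinv : ∀ v, φ (φ v) = v) (hne : ∀ v, φ v ≠ v) :
    ∃ e : V ≃ Fin (Fintype.card V / 2) × Fin 2,
      ∀ v, e (φ v) = flip2 _ (e v) := by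
  refine ⟨(pairEquiv φ hinv hne).trans
    (Equiv.prodCongr (Fintype.equivFinOfCardEq (card_pairs φ hinv hne)) (Equiv.refl _)), ?_⟩
  intro v
  rw [Equiv.trans_apply, Equiv.trans_apply, pairEquiv_flip φ hinv hne v]
  rfl


lemma compl_of_gp {n : ℕ} {X Y : Finset (Fin n)} (hcard : X.card + Y.card = n)
    (h : gp X Y) : Y = Xᶜ := by
  have h0 : X ∩ Y = ∅ := by
    rcases h with h | h
    · exact h
    · have hu := Finset.card_union_add_card_inter X Y
      rw [h, Finset.card_univ, Fintype.card_fin] at hu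
      have : (X ∩ Y).card = 0 := by omega
      exact Finset.card_eq_zero.mp this
  have hsub : Y ⊆ Xᶜ := by
    intro y hy
    rw [Finset.mem_compl]
    intro hx
    have : y ∈ X ∩ Y := Finset.mem_inter.mpr ⟨hx, hy⟩
    rw [h0] at this
    exact absurd this (Finset.notMem_empty y)
  refine Finset.eq_of_subset_of_card_le hsub ?_
  rw [Finset.card_compl, Fintype.card_fin]
  omega

/-- The matching involution on flags: `(A, B) ↦ (Bᶜ, Aᶜ)`. -/
def phiFlag {n a b : ℕ} (hab : a < b) (hn : a + b = n) : Equiv.Perm (Flag2 n a b) := by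
  have hb : b ≤ n := by omega
  have mk : ∀ f : Flag2 n a b, (f.1.2ᶜ ⊂ f.1.1ᶜ ∧ (f.1.2ᶜ).card = a ∧ (f.1.1ᶜ).card = b) := by
    intro f
    obtain ⟨hss, hca, hcb⟩ := f.2
    refine ⟨?_, ?_, ?_⟩
    · have hsub : f.1.2ᶜ ⊆ f.1.1ᶜ := Finset.compl_subset_compl.mpr hss.subset
      refine lt_of_le_of_ne hsub ?_
      intro he
      have := congrArg Finset.card he
      rw [Finset.card_compl, Finset.card_compl, Fintype.card_fin, hca, hcb] at this
      omega
    · rw [Finset.card_compl, Fintype.card_fin, hcb]; omega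
    · rw [Finset.card_compl, Fintype.card_fin, hca]; omega
  exact
  { toFun := fun f => ⟨(f.1.2ᶜ, f.1.1ᶜ), mk f⟩
    invFun := fun f => ⟨(f.1.2ᶜ, f.1.1ᶜ), mk f⟩
    left_inv := fun f => Subtype.ext (Prod.ext (by simp) (by simp))
    right_inv := fun f => Subtype.ext (Prod.ext (by simp) (by simp)) }

lemma phiFlag_invol {n a b : ℕ} (hab : a < b) (hn : a + b = n) (f : Flag2 n a b) :
    phiFlag hab hn (phiFlag hab hn f) = f :=
  Subtype.ext (Prod.ext (by simp [phiFlag]) (by simp [phiFlag]))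

lemma phiFlag_ne {n a b : ℕ} (ha : 1 ≤ a) (hab : a < b) (hn : a + b = n)
    (f : Flag2 n a b) : phiFlag hab hn f ≠ f := by
  intro h
  have h1 : f.1.2ᶜ = f.1.1 := congrArg (fun g => g.1.1) h
  obtain ⟨x, hx⟩ : f.1.1.Nonempty := by
    rw [← Finset.card_pos, f.2.2.1]; omega
  have hx2 : x ∈ f.1.2 := f.2.1.subset hx
  rw [← h1, Finset.mem_compl] at hx
  exact hx hx2

lemma genPos_iff {n a b : ℕ} (ha : 1 ≤ a) (hab : a < b) (hn : a + b = n)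
    (f g : Flag2 n a b) : GenPos f g ↔ g = phiFlag hab hn f := by
  constructor
  · rintro ⟨h1, h2, h3, h4⟩
    have hD : g.1.2 = f.1.1ᶜ := compl_of_gp (by rw [f.2.2.1, g.2.2.2]; omega) h2
    have hC : g.1.1 = f.1.2ᶜ := compl_of_gp (by rw [f.2.2.2, g.2.2.1]; omega) h3
    exact Subtype.ext (Prod.ext hC hD)
  · rintro rfl
    have hsub := f.2.1.subset
    refine ⟨?_, ?_, ?_, ?_⟩
    · left
      show f.1.1 ∩ f.1.2ᶜ = ∅
      rw [Finset.eq_empty_iff_forall_notMem]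
      intro x hx
      rw [Finset.mem_inter, Finset.mem_compl] at hx
      exact hx.2 (hsub hx.1)
    · left
      show f.1.1 ∩ f.1.1ᶜ = ∅
      simp
    · left
      show f.1.2 ∩ f.1.2ᶜ = ∅
      simp
    · right
      show f.1.2 ∪ f.1.1ᶜ = Finset.univ
      rw [Finset.eq_univ_iff_forall]
      intro x
      rw [Finset.mem_union, Finset.mem_compl]
      by_cases hx : x ∈ f.1.1
      · exact Or.inl (hsub hx)
      · exact Or.inr hx

lemma card_flag {n a b : ℕ} (hab : a < b) :
    Fintype.card (Flag2 n a b) = n.choose b * b.choose a := by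
  have E : Flag2 n a b ≃
      Σ B : {B : Finset (Fin n) // B.card = b}, {A : Finset (Fin n) // A ⊆ B.1 ∧ A.card = a} :=
    { toFun := fun f => ⟨⟨f.1.2, f.2.2.2⟩, ⟨f.1.1, f.2.1.subset, f.2.2.1⟩⟩
      invFun := fun x => ⟨(x.2.1, x.1.1),
        lt_of_le_of_ne x.2.2.1 (fun h => by
          have := congrArg Finset.card h
          rw [x.2.2.2, x.1.2] at this
          omega), x.2.2.2, x.1.2⟩
      left_inv := fun f => rfl
      right_inv := fun x => rfl }
  rw [Fintype.card_congr E, Fintype.card_sigma]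
  have h1 : ∀ B : {B : Finset (Fin n) // B.card = b},
      Fintype.card {A : Finset (Fin n) // A ⊆ B.1 ∧ A.card = a} = b.choose a := by
    intro B
    rw [Fintype.card_subtype]
    have : Finset.univ.filter (fun A : Finset (Fin n) => A ⊆ B.1 ∧ A.card = a) =
        Finset.powersetCard a B.1 := by
      ext A
      simp [Finset.mem_powersetCard]
    rw [this, Finset.card_powersetCard, B.2]
  rw [Finset.sum_congr rfl (fun B _ => h1 B), Finset.sum_const, Finset.card_univ,
    Fintype.card_subtype]
  have : Finset.univ.filter (fun B : Finset (Fin n) => B.card = b) =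
      Finset.powersetCard b Finset.univ := by
    ext B
    simp [Finset.mem_powersetCard]
  rw [this, Finset.card_powersetCard, Finset.card_univ, Fintype.card_fin, smul_eq_mul]


end AutMatch

/-- Lemma 4.1: for `T = {a,b}` with `a < b`, `a + b = n` and
`m = (1/2)·C(n,b)·C(b,a)`, the automorphism group of `Γ(n,T)` is isomorphic to the
wreath product `S₂ ≀ S_m`, of order `2^m · m!`. -/
theorem aut_GPGraph_matching (n a b : ℕ) (ha : 1 ≤ a) (hab : a < b) (hn : a + b = n) :
    Nonempty ((GPGraph n a b ≃g GPGraph n a b) ≃*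
        WreathS2 (Nat.choose n b * Nat.choose b a / 2)) ∧
    Nat.card (GPGraph n a b ≃g GPGraph n a b) =
      2 ^ (Nat.choose n b * Nat.choose b a / 2) *
        Nat.factorial (Nat.choose n b * Nat.choose b a / 2) := by
  classical
  set m := Nat.choose n b * Nat.choose b a / 2 with hm
  have hcard : Fintype.card (Flag2 n a b) = n.choose b * b.choose a := AutMatch.card_flag hab
  have hadj : ∀ f g, (GPGraph n a b).Adj f g ↔ g = AutMatch.phiFlag hab hn f := by
    intro f g
    constructor
    · rintro (⟨hne, hgp⟩ : f ≠ g ∧ GenPos f g)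
      exact (AutMatch.genPos_iff ha hab hn f g).mp hgp
    · rintro rfl
      exact (⟨Ne.symm (AutMatch.phiFlag_ne ha hab hn f),
        (AutMatch.genPos_iff ha hab hn f _).mpr rfl⟩ : _ ≠ _ ∧ GenPos _ _)
  obtain ⟨e, he⟩ := AutMatch.exists_flip_equiv (AutMatch.phiFlag hab hn)
    (AutMatch.phiFlag_invol hab hn) (AutMatch.phiFlag_ne ha hab hn)
  have hm2 : Fintype.card (Flag2 n a b) / 2 = m := by rw [hcard]
  let e' : Flag2 n a b ≃ Fin m × Fin 2 :=
    e.trans (Equiv.prodCongr (finCongr hm2) (Equiv.refl _))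
  have he' : ∀ v, e' (AutMatch.phiFlag hab hn v) = AutMatch.flip2 _ (e' v) := by
    intro v
    show (e.trans _) _ = _
    rw [Equiv.trans_apply, he v]
    rfl
  let E := (AutMatch.autEquivCentralizer (GPGraph n a b) _ hadj).trans
    ((AutMatch.centralizerCongr e' _ _ he').trans
      (AutMatch.wreathEquivCentralizer (Fin m)).symm)
  refine ⟨⟨E⟩, ?_⟩
  rw [Nat.card_congr E.toEquiv]
  have hsd : Nat.card (WreathS2 m) =
      Nat.card ((Fin m → Equiv.Perm (Fin 2)) × Equiv.Perm (Fin m)) :=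
    Nat.card_congr ⟨fun x => (x.left, x.right), fun p => ⟨p.1, p.2⟩,
      fun x => rfl, fun p => rfl⟩
  rw [hsd, Nat.card_prod, Nat.card_eq_fintype_card, Nat.card_eq_fintype_card,
    Fintype.card_fun, Fintype.card_perm, Fintype.card_perm, Fintype.card_fin, Fintype.card_fin]
  norm_num [Nat.factorial]
end
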